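/- arXiv:1102.5529 — 3 statements merged into one kernel-verified Lean document; each statement's English description precedes it below -/
import Mathlib

section
/- The inclusion F2 ⊆ F1 is strict: there exists an evolving graph in F1 but not in F2. -/
/-- A journey in an evolving graph `E` (where `E i u v` means edge `{u,v}` is present in
graph `G_i`): a walk whose edges carry a non-decreasing sequence of graph indices, each edge
present in its assigned graph. `Journey E i u v` means there is a journey from `u` to `v`
all of whose indices are `≥ i`. -/
inductive Journey {V : Type*} (E : ℕ → V → V → Prop) : ℕ → V → V → Prop
  | refl (i : ℕ) (u : V) : Journey E i u u
  | step {i j : ℕ} {u v w : V} (hij : i ≤ j) (he : E j u v)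
      (hj : Journey E j v w) : Journey E i u w

/-- `u ⇝ v` : there is a journey from `u` to `v`. -/
def Reach {V : Type*} (E : ℕ → V → V → Prop) (u v : V) : Prop := Journey E 0 u v

def Ew : ℕ → Fin 3 → Fin 3 → Prop := fun i a b =>
  (i = 1 ∧ ((a = 0 ∧ b = 1) ∨ (a = 1 ∧ b = 0))) ∨
  (i = 2 ∧ ((a = 0 ∧ b = 2) ∨ (a = 2 ∧ b = 0)))

lemma Ew_inv : ∀ {i : ℕ} {u w : Fin 3}, Journey Ew i u w →
    (u = 2 ∨ (2 ≤ i ∧ u ≠ 1)) → w ≠ 1 := by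
  intro i u w h
  induction h with
  | refl i u => rintro (rfl | ⟨_, hu⟩) <;> simp_all
  | step hij he hj ih =>
    rintro (rfl | ⟨h2, hu⟩)
    · rcases he with ⟨rfl, (⟨ha, _⟩ | ⟨ha, _⟩)⟩ | ⟨rfl, (⟨ha, _⟩ | ⟨_, rfl⟩)⟩
      · exact absurd ha (by decide)
      · exact absurd ha (by decide)
      · exact absurd ha (by decide)
      · exact ih (Or.inr ⟨le_refl 2, by decide⟩)
    · rcases he with ⟨rfl, _⟩ | ⟨rfl, (⟨_, rfl⟩ | ⟨_, rfl⟩)⟩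
      · omega
      · exact ih (Or.inl rfl)
      · exact ih (Or.inr ⟨le_refl 2, by decide⟩)

/-- The inclusion F2 ⊆ F1 is strict: there exists an evolving graph (symmetric
edge-presence relation) in F1 (some vertex reaches all by journeys) but not in F2
(not every vertex reaches every other). -/
theorem F1_not_subset_F2 :
    ∃ E : ℕ → Fin 3 → Fin 3 → Prop,
      (∀ i a b, E i a b → E i b a) ∧
      (∃ u : Fin 3, ∀ v : Fin 3, Reach E u v) ∧
      ¬ (∀ u v : Fin 3, Reach E u v) := by
  refine ⟨Ew, ?_, ⟨0, ?_⟩, ?_⟩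
  · intro i a b h
    rcases h with ⟨rfl, h | h⟩ | ⟨rfl, h | h⟩ <;>
      simp [Ew, h.1, h.2]
  · intro v
    fin_cases v
    · exact Journey.refl 0 0
    · exact Journey.step (by omega) (Or.inl ⟨rfl, Or.inl ⟨rfl, rfl⟩⟩) (Journey.refl 1 1)
    · exact Journey.step (by omega) (Or.inr ⟨rfl, Or.inl ⟨rfl, rfl⟩⟩) (Journey.refl 2 2)
  · intro h
    exact Ew_inv (h 2 1) (Or.inl rfl) rfl
end

section
/- Necessary condition for broadcast: in any execution of the propagation algorithm (rule: an I-labeled vertex relabels an N-labeled neighbor to I along a present edge), if a vertex v that was initially labeled N is labeled I at the end, then there exists a journey in the evolving graph from the initial emitter to v. Consequently, if all vertices end up labeled I, then the emitter can reach every vertex by a journey. -/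
/-- An execution of the propagation algorithm on the evolving graph `E`, starting at
time index `i` from informed set `S` and ending with informed set `T`. Each step picks
a time index `j ≥` the current one and an edge present in `G_j` between an `I`-labeled
vertex and an `N`-labeled vertex, and relabels the latter `I`; indices are
non-decreasing along the execution. -/
inductive BExec {V : Type*} (E : ℕ → V → V → Prop) : ℕ → Set V → Set V → Prop
  | refl (i : ℕ) (S : Set V) : BExec E i S S
  | step {i j : ℕ} {u v : V} {S T : Set V} (hij : i ≤ j) (he : E j u v)
      (hu : u ∈ S) (hv : v ∉ S) (hrest : BExec E j (insert v S) T) : BExec E i S T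

/-- A journey whose indices all lie in `[l, h]`. -/
inductive JBdd {V : Type*} (E : ℕ → V → V → Prop) : ℕ → ℕ → V → V → Prop
  | refl (l h : ℕ) (u : V) (hlh : l ≤ h) : JBdd E l h u u
  | step {l j h : ℕ} {u v w : V} (hlj : l ≤ j) (hjh : j ≤ h) (he : E j u v)
      (hj : JBdd E j h v w) : JBdd E l h u w

theorem JBdd.toJourney {V : Type*} {E : ℕ → V → V → Prop} {l h : ℕ} {u v : V}
    (hj : JBdd E l h u v) : Journey E l u v := by
  induction hj with
  | refl l h u _ => exact Journey.refl l u
  | step hlj hjh he _ ih => exact Journey.step hlj he ih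

theorem JBdd.mono {V : Type*} {E : ℕ → V → V → Prop} {l h h' : ℕ} {u v : V}
    (hj : JBdd E l h u v) (hh : h ≤ h') : JBdd E l h' u v := by
  induction hj with
  | refl l h u hlh => exact JBdd.refl l h' u (hlh.trans hh)
  | step hlj hjh he _ ih => exact JBdd.step hlj (hjh.trans hh) he (ih hh)

theorem JBdd.snoc {V : Type*} {E : ℕ → V → V → Prop} {l h j : ℕ} {u v w : V}
    (hj : JBdd E l h u v) (hhj : h ≤ j) (he : E j v w) : JBdd E l j u w := by
  induction hj with
  | refl l h u hlh =>
    exact JBdd.step (hlh.trans hhj) le_rfl he (JBdd.refl j j w le_rfl)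
  | step hlj hjh he' _ ih =>
    exact JBdd.step hlj (hjh.trans hhj) he' (ih hhj he)

theorem BExec.invariant {V : Type*} {E : ℕ → V → V → Prop} {i : ℕ} {S T : Set V}
    (emitter : V) (hexec : BExec E i S T)
    (hS : ∀ u ∈ S, JBdd E 0 i emitter u) : ∀ v ∈ T, JBdd E 0 i emitter v ∨
      ∃ k, i ≤ k ∧ JBdd E 0 k emitter v := by
  induction hexec with
  | refl i S => exact fun v hv => Or.inl (hS v hv)
  | @step i j u v S T' hij he hu hv hrest ih =>
    intro x hx
    have hS' : ∀ y ∈ insert v S, JBdd E 0 j emitter y := by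
      intro y hy
      rcases hy with rfl | hy
      · exact ((hS u hu).mono hij).snoc le_rfl he
      · exact (hS y hy).mono hij
    rcases ih hS' x hx with h | ⟨k, hk, h⟩
    · exact Or.inr ⟨j, hij, h⟩
    · exact Or.inr ⟨k, hij.trans hk, h⟩

/-- Necessary condition for broadcast: in any execution of the propagation algorithm
starting with only the emitter informed, every vertex informed at the end is reachable
from the emitter by a journey. In particular, if all vertices end up informed, the
emitter can reach every vertex by a journey. -/
theorem broadcast_necessary {V : Type*} [Fintype V] (E : ℕ → V → V → Prop)
    (emitter : V) (T : Set V) (hexec : BExec E 0 {emitter} T) :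
    (∀ v ∈ T, Reach E emitter v) ∧
      (T = Set.univ → ∀ v : V, Reach E emitter v) := by
  have hS : ∀ u ∈ ({emitter} : Set V), JBdd E 0 0 emitter u := by
    rintro u rfl
    exact JBdd.refl 0 0 _ le_rfl
  have key : ∀ v ∈ T, Reach E emitter v := by
    intro v hv
    rcases hexec.invariant emitter hS v hv with h | ⟨k, _, h⟩
    · exact h.toJourney
    · exact h.toJourney
  exact ⟨key, fun hT v => key v (hT ▸ Set.mem_univ v)⟩
end

section
/- Sufficient condition for broadcast under the progression hypothesis: if within each time interval [i, i+1) every edge present in G_i with endpoints labeled I and N gets relabeled (the N endpoint becomes I) by the end of the interval, then the existence of a strict journey from the emitter to every vertex implies all vertices are labeled I at the end of the execution. -/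
/-- A strict journey: as a journey, but with strictly increasing graph indices.
`SJourney E i u v` means a strict journey from `u` to `v` with all indices `≥ i`. -/
inductive SJourney {V : Type*} (E : ℕ → V → V → Prop) : ℕ → V → V → Prop
  | refl (i : ℕ) (u : V) : SJourney E i u u
  | step {i j : ℕ} {u v w : V} (hij : i ≤ j) (he : E j u v)
      (hj : SJourney E (j + 1) v w) : SJourney E i u w

/-- `u ⇝ˢᵗ v` : there is a strict journey from `u` to `v`. -/
def SReach {V : Type*} (E : ℕ → V → V → Prop) (u v : V) : Prop := SJourney E 0 u v

theorem broadcast_mono {V : Type*} (k : ℕ) (L : ℕ → Set V)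
    (hmono : ∀ i < k, L i ⊆ L (i + 1)) :
    ∀ i j : ℕ, i ≤ j → j ≤ k → L i ⊆ L j := by
  intro i j hij hjk
  induction j with
  | zero => simp_all
  | succ n ih =>
    rcases Nat.lt_or_ge i (n+1) with h | h
    · exact (ih (Nat.lt_succ_iff.mp h) (le_trans (Nat.le_succ n) hjk)).trans
        (hmono n (Nat.lt_of_lt_of_le (Nat.lt_succ_self n) hjk))
    · have : i = n + 1 := le_antisymm hij h
      subst this; exact le_refl _

/-- Sufficient condition for broadcast under the progression hypothesis.
`L i` is the set of `I`-labeled vertices at the start of interval `i` (for `0 ≤ i ≤ k`);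
initially only the emitter is informed; labels never revert from `I` to `N`; and within
every interval `i < k`, every edge of `G_i` joining an informed and an uninformed vertex
gets the uninformed endpoint informed by the end of the interval. If the emitter can
reach every vertex by a strict journey using indices `< k`, then every vertex is
informed at the end. -/
theorem broadcast_sufficient {V : Type*} [Fintype V] (E : ℕ → V → V → Prop) (k : ℕ)
    (L : ℕ → Set V) (emitter : V)
    (hinit : L 0 = {emitter})
    (hmono : ∀ i < k, L i ⊆ L (i + 1))
    (hprog : ∀ i < k, ∀ u v : V, E i u v → u ∈ L i → v ∉ L i → v ∈ L (i + 1))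
    (hstrict : ∀ v : V, SReach (fun i a b => i < k ∧ E i a b) emitter v) :
    ∀ v : V, v ∈ L k := by
  have key : ∀ (i : ℕ) (u v : V), SJourney (fun i a b => i < k ∧ E i a b) i u v →
      u ∈ L i → i ≤ k → v ∈ L k := by
    intro i u v hj
    induction hj with
    | refl i u => intro hu hik; exact broadcast_mono k L hmono i k hik le_rfl hu
    | step hij he hjw ih =>
      rename_i i j u v w
      intro hu hik
      obtain ⟨hjk, hE⟩ := he
      have huj : u ∈ L j := broadcast_mono k L hmono i j hij hjk.le hu
      have hv : v ∈ L (j + 1) := by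
        by_cases hvj : v ∈ L j
        · exact hmono j hjk hvj
        · exact hprog j hjk u v hE huj hvj
      exact ih hv hjk
  intro v
  have h := hstrict v
  exact key 0 emitter v h (by simp [hinit]) (Nat.zero_le k)
end
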